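/- The convex hull of the set {Γ density operator : spec↓(Γ) = w} of density operators with fixed sorted spectrum w equals {Γ density operator : spec(Γ) ≺ w}, the set of density operators whose spectrum is majorized by w. -/

import Mathlib

open scoped ComplexOrder

/-- The vector `v` with entries sorted in decreasing order. -/
noncomputable def sortDesc {d : ℕ} (v : Fin d → ℝ) : Fin d → ℝ :=
  fun i => v (Tuple.sort (fun j => -v j) i)

/-- Sum of the `k` largest entries of `v`. -/
noncomputable def psum {d : ℕ} (v : Fin d → ℝ) (k : ℕ) : ℝ :=
  ∑ i ∈ Finset.univ.filter (fun i : Fin d => (i : ℕ) < k), sortDesc v i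

/-- `v ≺ w` : `v` is majorized by `w`. -/
def Majorizes {d : ℕ} (v w : Fin d → ℝ) : Prop :=
  (∀ k : ℕ, k ≤ d → psum v k ≤ psum w k) ∧ ∑ i, v i = ∑ i, w i

/-!
A spectrum majorized by `w` lies in the permutohedron of `w`: otherwise a linear functional
separates it, and the rearrangement inequality followed by Abel summation bounds the functional at
the spectrum by its value at a permutation of `w`. Conjugating diagonal matrices by the eigenbasis
of `Γ` turns this convex combination of permutations of `w` into one of density operators with
spectrum `w`.

Conversely, majorization of the spectrum by `w` is a convex condition. In the eigenbasis of
`a • X + b • Y` the spectrum is the diagonal, which is `a` times the diagonal of `X` plus `b` times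
that of `Y` in the same basis; and by Schur's theorem the diagonal of a Hermitian matrix in any
orthonormal basis is the image of its spectrum under a doubly stochastic matrix, hence majorized by
the spectrum.
-/

open Finset Matrix

section Majorization

variable {d : ℕ}

lemma sortDesc_eq_comp (v : Fin d → ℝ) : sortDesc v = v ∘ Tuple.sort (fun j => -v j) := rfl

lemma sortDesc_antitone (v : Fin d → ℝ) : Antitone (sortDesc v) := fun _ _ hij => by
  simpa [sortDesc] using Tuple.monotone_sort (fun j => -v j) hij

lemma sortDesc_eq_self {w : Fin d → ℝ} (hw : Antitone w) : sortDesc w = w := by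
  have : Tuple.sort (fun j => -w j) = Equiv.refl _ :=
    Tuple.sort_eq_refl_iff_monotone.mpr fun _ _ hij => neg_le_neg (hw hij)
  simp [sortDesc_eq_comp, this]

lemma sortDesc_comp_perm (v : Fin d → ℝ) (σ : Equiv.Perm (Fin d)) :
    sortDesc (v ∘ σ) = sortDesc v := by
  funext i
  exact neg_injective (congr_fun (Tuple.comp_perm_comp_sort_eq_comp_sort (f := fun j => -v j)) i)

lemma sum_sortDesc (v : Fin d → ℝ) : ∑ i, sortDesc v i = ∑ i, v i :=
  Equiv.sum_comp _ v

lemma sortDesc_eq_of_map_univ_eq {u v : Fin d → ℝ} (h : univ.val.map u = univ.val.map v) :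
    sortDesc u = sortDesc v := by
  have hmap (x : Fin d → ℝ) : univ.val.map (sortDesc x) = univ.val.map x := by
    rw [sortDesc_eq_comp, ← Multiset.map_map, Multiset.map_univ_val_equiv]
  have hperm : (List.ofFn (sortDesc u)).Perm (List.ofFn (sortDesc v)) := by
    rw [← Multiset.coe_eq_coe, ← Fin.univ_val_map, ← Fin.univ_val_map, hmap, hmap, h]
  exact List.ofFn_injective <| hperm.eq_of_sortedGE
    (List.sortedGE_ofFn_iff.mpr (sortDesc_antitone u))
    (List.sortedGE_ofFn_iff.mpr (sortDesc_antitone v))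

lemma majorizes_of_sortDesc_eq {v w : Fin d → ℝ} (h : sortDesc v = sortDesc w) :
    Majorizes v w :=
  ⟨fun k _ => by unfold psum; rw [h], by rw [← sum_sortDesc v, h, sum_sortDesc]⟩

lemma psum_of_antitone {v : Fin d → ℝ} (hv : Antitone v) (k : ℕ) :
    psum v k = ∑ i ∈ univ.filter (fun i : Fin d => (i : ℕ) < k), v i := by
  rw [psum, sortDesc_eq_self hv]

lemma exists_card_eq_psum_eq_sum (v : Fin d → ℝ) {k : ℕ} (hk : k ≤ d) :
    ∃ s : Finset (Fin d), #s = k ∧ psum v k = ∑ i ∈ s, v i := by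
  let σ := Tuple.sort (fun j => -v j)
  refine ⟨(univ.filter fun i : Fin d => (i : ℕ) < k).map σ.toEmbedding, ?_, ?_⟩
  · rw [card_map, Fin.card_filter_val_lt, min_eq_right hk]
  · rw [sum_map]
    rfl

lemma sum_mul_le_sum_sortDesc_mul (c x : Fin d → ℝ) :
    ∑ i, c i * x i ≤ ∑ i, sortDesc c i * sortDesc x i := by
  let π := Tuple.sort (fun j => -c j)
  let ρ := Tuple.sort (fun j => -x j)
  calc ∑ i, c i * x i = ∑ i, sortDesc c i * sortDesc x ((π.trans ρ.symm) i) := by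
        rw [← Equiv.sum_comp π]
        refine sum_congr rfl fun i _ => ?_
        simp only [sortDesc_eq_comp, Function.comp_apply, Equiv.trans_apply,
          Equiv.apply_symm_apply, π, ρ]
    _ ≤ ∑ i, sortDesc c i * sortDesc x i :=
        ((sortDesc_antitone c).monovary (sortDesc_antitone x)).sum_mul_comp_perm_le_sum_mul

lemma sum_range_mul_le_of_sum_range_le {f g h : ℕ → ℝ} {n : ℕ}
    (hf : ∀ i, i + 1 < n → f (i + 1) ≤ f i)
    (hgh : ∀ k ≤ n, ∑ j ∈ range k, g j ≤ ∑ j ∈ range k, h j)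
    (hn : ∑ j ∈ range n, g j = ∑ j ∈ range n, h j) :
    ∑ j ∈ range n, f j * g j ≤ ∑ j ∈ range n, f j * h j := by
  have parts (u : ℕ → ℝ) := sum_range_by_parts f u n
  simp only [smul_eq_mul] at parts
  rw [parts g, parts h, hn]
  refine sub_le_sub_left (sum_le_sum fun i hi => ?_) _
  have hi : i + 1 < n := by have := mem_range.mp hi; omega
  exact mul_le_mul_of_nonpos_left (hgh (i + 1) hi.le) (sub_nonpos.mpr (hf i hi))

lemma Antitone.sum_mul_le_sum_mul_of_prefix_le {c x y : Fin d → ℝ} (hc : Antitone c)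
    (hxy : ∀ k ≤ d, ∑ i ∈ univ.filter (fun i : Fin d => (i : ℕ) < k), x i
      ≤ ∑ i ∈ univ.filter (fun i : Fin d => (i : ℕ) < k), y i)
    (hsum : ∑ i, x i = ∑ i, y i) :
    ∑ i, c i * x i ≤ ∑ i, c i * y i := by
  let ext (u : Fin d → ℝ) : ℕ → ℝ := Function.extend Fin.val u 0
  have ext_val (u : Fin d → ℝ) (i : Fin d) : ext u i = u i :=
    Fin.val_injective.extend_apply u 0 i
  have sum_mul_ext (u v : Fin d → ℝ) :
      ∑ i, u i * v i = ∑ j ∈ range d, ext u j * ext v j := by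
    simp only [← Fin.sum_univ_eq_sum_range, ext_val]
  have sum_filter_ext (u : Fin d → ℝ) {k : ℕ} (hk : k ≤ d) :
      ∑ i ∈ univ.filter (fun i : Fin d => (i : ℕ) < k), u i = ∑ j ∈ range k, ext u j := by
    have : (univ.filter fun i : Fin d => (i : ℕ) < k).map Fin.valEmbedding = range k := by
      ext j
      simp only [mem_map, mem_filter, mem_univ, true_and, Fin.valEmbedding_apply, mem_range]
      exact ⟨fun ⟨i, hi, hij⟩ => hij ▸ hi, fun hj => ⟨⟨j, by omega⟩, hj, rfl⟩⟩
    rw [← this, sum_map]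
    exact sum_congr rfl fun i _ => (ext_val u i).symm
  have sum_ext (u : Fin d → ℝ) : ∑ i, u i = ∑ j ∈ range d, ext u j := by
    simp only [← Fin.sum_univ_eq_sum_range, ext_val]
  rw [sum_mul_ext, sum_mul_ext]
  refine sum_range_mul_le_of_sum_range_le (fun i hi => ?_) (fun k hk => ?_) ?_
  · rw [ext_val c ⟨i + 1, hi⟩, ext_val c ⟨i, by omega⟩]
    exact hc (Fin.mk_le_mk.mpr (Nat.le_succ i))
  · rw [← sum_filter_ext x hk, ← sum_filter_ext y hk]
    exact hxy k hk
  · rwa [sum_ext, sum_ext] at hsum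

lemma Majorizes.sum_mul_le {lam w : Fin d → ℝ} (h : Majorizes lam w) (hw : Antitone w)
    (c : Fin d → ℝ) : ∑ i, c i * lam i ≤ ∑ i, sortDesc c i * w i :=
  (sum_mul_le_sum_sortDesc_mul c lam).trans <|
    (sortDesc_antitone c).sum_mul_le_sum_mul_of_prefix_le
      (fun k hk => by rw [← psum_of_antitone hw]; exact h.1 k hk) (by rw [sum_sortDesc, h.2])

theorem Majorizes.mem_convexHull_perm {lam w : Fin d → ℝ} (h : Majorizes lam w)
    (hw : Antitone w) :
    lam ∈ convexHull ℝ (Set.range fun σ : Equiv.Perm (Fin d) => w ∘ σ) := by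
  by_contra hlam
  obtain ⟨f, u, hfu, hlamu⟩ := geometric_hahn_banach_closed_point (convex_convexHull ℝ _)
    ((Set.finite_range _).isClosed_convexHull (𝕜 := ℝ)) hlam
  let c (i : Fin d) : ℝ := f fun j => if i = j then 1 else 0
  have hf (x : Fin d → ℝ) : f x = ∑ i, c i * x i := by
    have := (f : (Fin d → ℝ) →ₗ[ℝ] ℝ).pi_apply_eq_sum_univ x
    simp only [ContinuousLinearMap.coe_coe, smul_eq_mul] at this
    simp only [this, mul_comm, c]
  let π := Tuple.sort (fun j => -c j)
  have hle : f lam ≤ f (w ∘ π.symm) :=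
    calc f lam = ∑ i, c i * lam i := hf lam
      _ ≤ ∑ i, sortDesc c i * w i := h.sum_mul_le hw c
      _ = f (w ∘ π.symm) := by
        rw [hf, ← Equiv.sum_comp π (fun i => c i * (w ∘ π.symm) i)]
        simp only [sortDesc_eq_comp, Function.comp_apply, Equiv.symm_apply_apply, π]
  linarith [hfu _ (subset_convexHull ℝ _ ⟨π.symm, rfl⟩)]

lemma sum_mul_le_psum (v e : Fin d → ℝ) {k : ℕ} (he0 : ∀ i, 0 ≤ e i) (he1 : ∀ i, e i ≤ 1)
    (he : ∑ i, e i = k) : ∑ i, e i * v i ≤ psum v k := by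
  have hk : k ≤ d := by
    have : (k : ℝ) ≤ d := he ▸ (sum_le_sum fun i _ => he1 i).trans_eq (by simp)
    exact_mod_cast this
  let top (i : Fin d) : ℝ := if (i : ℕ) < k then 1 else 0
  have htop : Antitone top := fun i j hij => by
    have : (i : ℕ) ≤ j := hij
    simp only [top]
    split_ifs <;> first | omega | norm_num
  have psum_top (j : ℕ) (hj : j ≤ d) : psum top j = min j k := by
    simp only [psum_of_antitone htop, top, sum_boole, filter_filter, ← lt_min_iff,
      Fin.card_filter_val_lt, min_eq_right (min_le_of_left_le hj)]
  have hmaj : Majorizes e top := by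
    refine ⟨fun j hj => ?_, ?_⟩
    · rw [psum_top j hj, Nat.cast_min]
      refine le_min ?_ ?_
      · calc psum e j ≤ #(univ.filter fun i : Fin d => (i : ℕ) < j) • (1 : ℝ) :=
              sum_le_card_nsmul _ _ _ fun i _ => he1 _
          _ = j := by simp [Fin.card_filter_val_lt, hj]
      · calc psum e j ≤ ∑ i, sortDesc e i := sum_le_univ_sum_of_nonneg fun i => he0 _
          _ = k := by rw [sum_sortDesc, he]
    · simp [he, top, sum_boole, Fin.card_filter_val_lt, hk]
  calc ∑ i, e i * v i = ∑ i, v i * e i := by simp only [mul_comm]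
    _ ≤ ∑ i, sortDesc v i * top i := hmaj.sum_mul_le htop v
    _ = psum v k := by simp only [top, mul_ite, mul_one, mul_zero, ← sum_filter, psum]

lemma sum_le_psum (v : Fin d → ℝ) (s : Finset (Fin d)) : ∑ i ∈ s, v i ≤ psum v #s := by
  have := sum_mul_le_psum (k := #s) v (fun i => if i ∈ s then 1 else 0)
    (fun i => by split_ifs <;> norm_num) (fun i => by split_ifs <;> norm_num)
    (by simp)
  simpa only [ite_mul, one_mul, zero_mul, sum_ite_mem, univ_inter] using this

lemma psum_smul_add_smul_le (x y : Fin d → ℝ) {a b : ℝ} (ha : 0 ≤ a) (hb : 0 ≤ b) {k : ℕ}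
    (hk : k ≤ d) : psum (a • x + b • y) k ≤ a * psum x k + b * psum y k := by
  obtain ⟨s, rfl, hs⟩ := exists_card_eq_psum_eq_sum (a • x + b • y) hk
  simp only [hs, Pi.add_apply, Pi.smul_apply, smul_eq_mul, sum_add_distrib, ← mul_sum]
  gcongr <;> exact sum_le_psum _ s

lemma convex_setOf_majorizes (w : Fin d → ℝ) : Convex ℝ {x : Fin d → ℝ | Majorizes x w} := by
  intro x hx y hy a b ha hb hab
  refine ⟨fun k hk => ?_, ?_⟩
  · calc psum (a • x + b • y) k ≤ a * psum x k + b * psum y k :=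
          psum_smul_add_smul_le x y ha hb hk
      _ ≤ a * psum w k + b * psum w k := by gcongr; exacts [hx.1 k hk, hy.1 k hk]
      _ = psum w k := by rw [← add_mul, hab, one_mul]
  · simp only [Pi.add_apply, Pi.smul_apply, smul_eq_mul, sum_add_distrib, ← mul_sum, hx.2, hy.2,
      ← add_mul, hab, one_mul]

lemma Majorizes.trans {u v w : Fin d → ℝ} (huv : Majorizes u v) (hvw : Majorizes v w) :
    Majorizes u w :=
  ⟨fun k hk => (huv.1 k hk).trans (hvw.1 k hk), huv.2.trans hvw.2⟩

lemma majorizes_mulVec_of_mem_doublyStochastic {P : Matrix (Fin d) (Fin d) ℝ}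
    (hP : P ∈ doublyStochastic ℝ (Fin d)) (x : Fin d → ℝ) : Majorizes (P *ᵥ x) x := by
  refine ⟨fun k hk => ?_, sum_mulVec_of_mem_doublyStochastic hP⟩
  obtain ⟨s, rfl, hs⟩ := exists_card_eq_psum_eq_sum (P *ᵥ x) hk
  calc psum (P *ᵥ x) #s = ∑ j, (∑ i ∈ s, P i j) * x j := by
        simp only [hs, Matrix.mulVec, dotProduct, sum_mul]
        exact sum_comm
    _ ≤ psum x #s := sum_mul_le_psum x _
        (fun j => sum_nonneg fun i _ => nonneg_of_mem_doublyStochastic hP)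
        (fun j => (sum_le_univ_sum_of_nonneg fun i => nonneg_of_mem_doublyStochastic hP).trans_eq
          (sum_col_of_mem_doublyStochastic hP j))
        (by rw [sum_comm]; simp [sum_row_of_mem_doublyStochastic hP])

end Majorization

section Spectrum

open Unitary

variable {n : Type*} [Fintype n] [DecidableEq n] {d : ℕ}

lemma normSq_unitary_mem_doublyStochastic (U : unitaryGroup n ℂ) :
    (of fun i j => Complex.normSq ((U : Matrix n n ℂ) i j)) ∈ doublyStochastic ℝ n := by
  have hrow (i : n) : ∑ j, Complex.normSq ((U : Matrix n n ℂ) i j) = 1 := by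
    have := congr_fun (congr_fun (mem_unitaryGroup_iff.mp U.2) i) i
    simp only [mul_apply, star_apply, Complex.star_def, Complex.mul_conj, one_apply_eq] at this
    exact_mod_cast this
  have hcol (j : n) : ∑ i, Complex.normSq ((U : Matrix n n ℂ) i j) = 1 := by
    have := congr_fun (congr_fun (mem_unitaryGroup_iff'.mp U.2) j) j
    simp only [mul_apply, star_apply, Complex.star_def, mul_comm, Complex.mul_conj,
      one_apply_eq] at this
    exact_mod_cast this
  rw [mem_doublyStochastic_iff_sum]
  exact ⟨fun i j => Complex.normSq_nonneg _, hrow, hcol⟩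

lemma majorizes_diag_conjStarAlgAut_diagonal (U : unitaryGroup (Fin d) ℂ) (v : Fin d → ℝ) :
    Majorizes (fun i => (conjStarAlgAut ℂ _ U (diagonal (RCLike.ofReal ∘ v)) i i).re) v := by
  convert majorizes_mulVec_of_mem_doublyStochastic (normSq_unitary_mem_doublyStochastic U) v
    using 1
  funext i
  rw [conjStarAlgAut_apply, mul_apply, Complex.re_sum, mulVec, dotProduct]
  refine sum_congr rfl fun m _ => ?_
  rw [mul_diagonal, star_apply, mul_right_comm, Complex.star_def, Complex.mul_conj]
  simp [mul_comm]

lemma Matrix.IsHermitian.majorizes_diag_conjStarAlgAut {A : Matrix (Fin d) (Fin d) ℂ}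
    (hA : A.IsHermitian) (V : unitaryGroup (Fin d) ℂ) :
    Majorizes (fun i => (conjStarAlgAut ℂ _ V A i i).re) hA.eigenvalues := by
  have : conjStarAlgAut ℂ _ V A = conjStarAlgAut ℂ _ (V * hA.eigenvectorUnitary)
      (diagonal (RCLike.ofReal ∘ hA.eigenvalues)) := by
    conv_lhs => rw [hA.spectral_theorem]
    rw [map_mul]
    rfl
  rw [this]
  exact majorizes_diag_conjStarAlgAut_diagonal _ _

lemma Matrix.IsHermitian.sortDesc_eigenvalues_eq_of_eq_conjStarAlgAut
    {A : Matrix (Fin d) (Fin d) ℂ} (hA : A.IsHermitian) {U : unitaryGroup (Fin d) ℂ} {v : Fin d → ℝ}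
    (hAv : A = conjStarAlgAut ℂ _ U (diagonal (RCLike.ofReal ∘ v))) :
    sortDesc hA.eigenvalues = sortDesc v := by
  have hchar : A.charpoly = ∏ i, (Polynomial.X - Polynomial.C (RCLike.ofReal (v i) : ℂ)) := by
    rw [hAv, conjStarAlgAut_apply, charpoly_mul_comm, ← mul_assoc, mem_unitaryGroup_iff'.mp U.2,
      one_mul, charpoly_diagonal]
    rfl
  apply sortDesc_eq_of_map_univ_eq
  apply Multiset.map_injective (RCLike.ofReal_injective (K := ℂ))
  rw [Multiset.map_map, ← hA.roots_charpoly_eq_eigenvalues, hchar,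
    Polynomial.roots_prod _ _ (prod_ne_zero_iff.mpr fun i _ => Polynomial.X_sub_C_ne_zero _)]
  simp [Polynomial.roots_X_sub_C, Function.comp_def]

lemma conjStarAlgAut_diagonal_mem_convexHull_image (U : unitaryGroup n ℂ) {s : Set (n → ℝ)}
    {x : n → ℝ} (hx : x ∈ convexHull ℝ s) :
    conjStarAlgAut ℂ _ U (diagonal (RCLike.ofReal ∘ x)) ∈
      convexHull ℝ ((fun y => conjStarAlgAut ℂ _ U (diagonal (RCLike.ofReal ∘ y))) '' s) := by
  have hlin :
      IsLinearMap ℝ fun y : n → ℝ => conjStarAlgAut ℂ _ U (diagonal (RCLike.ofReal ∘ y)) :=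
    ⟨fun x y => by
      rw [show diagonal (RCLike.ofReal ∘ (x + y)) =
          diagonal (RCLike.ofReal ∘ x) + diagonal (RCLike.ofReal ∘ y) by
        ext i j; by_cases h : i = j <;> simp [h], map_add], fun a x => by
      rw [show diagonal (RCLike.ofReal ∘ (a • x)) = a • diagonal (RCLike.ofReal ∘ x) by
        ext i j; by_cases h : i = j <;> simp [h]]
      simp [conjStarAlgAut_apply]⟩
  exact hlin.image_convexHull s ▸ Set.mem_image_of_mem _ hx

lemma exists_posSemidef_conjStarAlgAut_diagonal (U : unitaryGroup (Fin d) ℂ) {v : Fin d → ℝ}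
    (hv : ∀ i, 0 ≤ v i) (hv1 : ∑ i, v i = 1) :
    ∃ h : (conjStarAlgAut ℂ _ U (diagonal (RCLike.ofReal ∘ v))).PosSemidef,
      (conjStarAlgAut ℂ _ U (diagonal (RCLike.ofReal ∘ v))).trace = 1 ∧
        sortDesc h.1.eigenvalues = sortDesc v := by
  have hpsd : (conjStarAlgAut ℂ _ U (diagonal (RCLike.ofReal ∘ v))).PosSemidef := by
    rw [conjStarAlgAut_apply, star_eq_conjTranspose]
    exact (posSemidef_diagonal_iff.mpr fun i => by simpa using hv i).mul_mul_conjTranspose_same _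
  refine ⟨hpsd, ?_, hpsd.isHermitian.sortDesc_eigenvalues_eq_of_eq_conjStarAlgAut rfl⟩
  rw [conjStarAlgAut_apply, trace_mul_cycle, mem_unitaryGroup_iff'.mp U.2, one_mul,
    trace_diagonal]
  simp [← Complex.ofReal_sum, hv1]

lemma convex_setOf_majorizes_eigenvalues (w : Fin d → ℝ) :
    Convex ℝ {Γ : Matrix (Fin d) (Fin d) ℂ | ∃ hΓ : Γ.PosSemidef,
      Γ.trace = 1 ∧ Majorizes hΓ.1.eigenvalues w} := by
  rintro X ⟨hX, hXtr, hXw⟩ Y ⟨hY, hYtr, hYw⟩ a b ha hb hab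
  have hZ : (a • X + b • Y).PosSemidef := (hX.smul ha).add (hY.smul hb)
  refine ⟨hZ, ?_, ?_⟩
  · rw [trace_add, trace_smul, trace_smul, hXtr, hYtr, ← add_smul, hab, one_smul]
  · let V := star hZ.1.eigenvectorUnitary
    let diag (A : Matrix (Fin d) (Fin d) ℂ) (i : Fin d) : ℝ := (conjStarAlgAut ℂ _ V A i i).re
    have heig : hZ.1.eigenvalues = a • diag X + b • diag Y := by
      funext i
      have h : (conjStarAlgAut ℂ _ V (a • X + b • Y) i i).re = hZ.1.eigenvalues i := by
        simp [V, hZ.isHermitian.conjStarAlgAut_star_eigenvectorUnitary]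
      rw [← h]
      simp [diag, conjStarAlgAut_apply, mul_add, add_mul]
    rw [heig]
    exact convex_setOf_majorizes w ((hX.isHermitian.majorizes_diag_conjStarAlgAut V).trans hXw)
      ((hY.isHermitian.majorizes_diag_conjStarAlgAut V).trans hYw) ha hb hab

end Spectrum

/-- The convex hull of the set of density operators with fixed sorted spectrum `w`
equals the set of density operators whose spectrum is majorized by `w`. -/
theorem convexHull_fixed_spectrum_eq_majorized {D : ℕ}
    (w : Fin D → ℝ) (hwmono : Antitone w) (hwpos : ∀ j, 0 ≤ w j)
    (hwsum : ∑ j, w j = 1) :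
    convexHull ℝ {Γ : Matrix (Fin D) (Fin D) ℂ | ∃ hΓ : Γ.PosSemidef,
        Γ.trace = 1 ∧ sortDesc hΓ.1.eigenvalues = w} =
      {Γ : Matrix (Fin D) (Fin D) ℂ | ∃ hΓ : Γ.PosSemidef,
        Γ.trace = 1 ∧ Majorizes hΓ.1.eigenvalues w} := by
  refine (convexHull_min ?_ (convex_setOf_majorizes_eigenvalues w)).antisymm ?_
  · rintro Γ ⟨hΓ, htr, hsort⟩
    exact ⟨hΓ, htr, majorizes_of_sortDesc_eq (by rw [hsort, sortDesc_eq_self hwmono])⟩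
  · rintro Γ ⟨hΓ, -, hmaj⟩
    rw [hΓ.1.spectral_theorem]
    refine convexHull_mono ?_ (conjStarAlgAut_diagonal_mem_convexHull_image _
      (hmaj.mem_convexHull_perm hwmono))
    rintro _ ⟨_, ⟨σ, rfl⟩, rfl⟩
    obtain ⟨hpsd, htr, hsort⟩ := exists_posSemidef_conjStarAlgAut_diagonal (v := w ∘ σ)
      hΓ.1.eigenvectorUnitary (fun i => hwpos (σ i)) ((Equiv.sum_comp σ w).trans hwsum)
    exact ⟨hpsd, htr, by rw [hsort, sortDesc_comp_perm, sortDesc_eq_self hwmono]⟩
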